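/- Main lower bound (combinatorial core): Let n ≥ 2^8, let σ = 2^m with m ≥ 8, let k = ⌊(log₂ n)/(2m)⌋ ≥ 1, and suppose S ≤ (1/8)·n·m. Suppose F is the family of all σ^(n − kσ^k) strings of length n starting with the fixed de Bruijn-style prefix listing all length-k strings, and suppose there is an assignment to each s ∈ F of an S-bit encoding and a probe set T_s ⊆ {0,...,n−1} with |T_s| ≤ Tn/k for some positive integer T, such that any two strings with equal encodings and agreeing on their (equal) probe sets are equal. Then T ≥ k/4. -/

import Mathlib

/-!
A string of `F` is determined by its encoding, its probe set and the symbols it has at the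
probes, so `|F| ≤ 2^S · 2^n · σ^(Tn/k)`. On the other hand `F` fixes only the first
`kσ^k ≤ n/2` symbols, so `|F| ≥ σ^(n/2)`. Taking `log₂` and using `S ≤ nm/8` and `n ≤ nm/8`
(as `m ≥ 8`) leaves `m · Tn/k ≥ nm/4`, i.e. `T ≥ k/4`.
-/

open Finset

theorem card_le_of_determined_by_encoding_and_probes {ι α β : Type*} [Fintype ι] [Fintype α]
    [Nonempty α] [Fintype β] (F : Finset (ι → α)) (enc : (ι → α) → β) (P : (ι → α) → Finset ι)
    (B : ℕ) (hP : ∀ s ∈ F, #(P s) ≤ B)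
    (hdist : ∀ s ∈ F, ∀ s' ∈ F, enc s = enc s' → P s = P s' → (∀ i ∈ P s, s i = s' i) →
      s = s') :
    #F ≤ Fintype.card α ^ B * (Fintype.card β * 2 ^ Fintype.card ι) := by
  classical
  have hfiber (b : β) (A : Finset ι) :
      #{s ∈ F | (enc s, P s) = (b, A)} ≤ Fintype.card α ^ #A := by
    have hrestrict : Set.InjOn (fun (s : ι → α) (i : A) => s i)
        ↑({s ∈ F | (enc s, P s) = (b, A)} : Finset (ι → α)) := by
      intro s hs s' hs' hss'
      simp only [coe_filter, Prod.mk.injEq] at hs hs'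
      refine hdist s hs.1 s' hs'.1 (hs.2.1.trans hs'.2.1.symm) (hs.2.2.trans hs'.2.2.symm) ?_
      intro i hi
      exact congrFun hss' ⟨i, hs.2.2 ▸ hi⟩
    calc #{s ∈ F | (enc s, P s) = (b, A)} ≤ #(univ : Finset (A → α)) :=
          card_le_card_of_injOn _ (fun _ _ => mem_univ _) hrestrict
      _ = Fintype.card α ^ #A := by simp
  calc #F ≤ Fintype.card α ^ B * #(F.image fun s => (enc s, P s)) := by
        refine card_le_mul_card_image F _ ?_
        simp only [mem_image, forall_exists_index, and_imp]
        rintro _ s hs rfl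
        exact (hfiber _ _).trans (Nat.pow_le_pow_right Fintype.card_pos (hP s hs))
    _ ≤ Fintype.card α ^ B * Fintype.card (β × Finset ι) := by gcongr; exact card_le_univ _
    _ = Fintype.card α ^ B * (Fintype.card β * 2 ^ Fintype.card ι) := by
        rw [Fintype.card_prod, Fintype.card_finset]

theorem card_pow_sub_card_le_card_filter_comp_eq {ι κ α : Type*} [Fintype ι] [Fintype κ]
    [DecidableEq ι] [Fintype α] [DecidableEq α] (pos : κ ↪ ι) (v : κ → α) :
    Fintype.card α ^ (Fintype.card ι - Fintype.card κ) ≤ #{s : ι → α | s ∘ pos = v} := by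
  classical
  let split := Equiv.piEquivPiSubtypeProd (· ∈ Set.range pos) (fun _ => α)
  let onRange (i : Set.range pos) : α := v ((Equiv.ofInjective pos pos.injective).symm i)
  let extend (g : {i // i ∉ Set.range pos} → α) : ι → α := split.symm (onRange, g)
  have hextend : ∀ g, extend g ∘ pos = v := by
    intro g
    funext c
    simp [extend, split, onRange, Equiv.piEquivPiSubtypeProd_symm_apply]
  calc Fintype.card α ^ (Fintype.card ι - Fintype.card κ)
        = #(univ : Finset ({i // i ∉ Set.range pos} → α)) := by
        rw [card_univ, Fintype.card_fun, Fintype.card_subtype_compl,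
          Set.card_range_of_injective pos.injective]
    _ ≤ #{s : ι → α | s ∘ pos = v} :=
        card_le_card_of_injOn extend (fun g _ => by simp [hextend])
          (fun g _ g' _ h => by simpa [extend] using split.symm.injective h)

theorem natFloor_logb_div_natCast (b n c : ℕ) :
    ⌊Real.logb b n / c⌋₊ = Nat.log b n / c := by
  rw [Nat.floor_div_natCast, Real.natFloor_logb_natCast]

theorem pow_mul_le_of_eq_log_div {b n c k : ℕ} (hk : k = Nat.log b n / c) (hk1 : 1 ≤ k) :
    b ^ (c * k) ≤ n := by
  have hlog : 0 < Nat.log b n := hk1.trans (hk ▸ Nat.div_le_self _ _)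
  obtain ⟨hbn, hb⟩ := Nat.log_pos_iff.1 hlog
  calc b ^ (c * k) ≤ b ^ Nat.log b n := Nat.pow_le_pow_right (by omega) (hk ▸ Nat.mul_div_le _ _)
    _ ≤ n := Nat.pow_log_le_self b (by omega)

theorem two_mul_mul_pow_le_pow_two_mul {σ : ℕ} (hσ : 4 ≤ σ) (k : ℕ) :
    2 * (k * σ ^ k) ≤ σ ^ (2 * k) := by
  have h2k : 2 * k ≤ σ ^ k :=
    calc 2 * k ≤ 2 ^ (2 * k) := Nat.lt_two_pow_self.le
      _ = 4 ^ k := by rw [pow_mul]; norm_num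
      _ ≤ σ ^ k := Nat.pow_le_pow_left hσ k
  calc 2 * (k * σ ^ k) = 2 * k * σ ^ k := by ring
    _ ≤ σ ^ k * σ ^ k := Nat.mul_le_mul_right _ h2k
    _ = σ ^ (2 * k) := by ring

theorem two_mul_mul_pow_le_of_eq_floor_logb {n m k : ℕ} (hm : 2 ≤ m)
    (hk : k = ⌊Real.logb 2 n / (2 * m)⌋₊) (hk1 : 1 ≤ k) : 2 * (k * (2 ^ m) ^ k) ≤ n := by
  have h4 : 4 ≤ 2 ^ m :=
    calc 4 = 2 ^ 2 := by norm_num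
      _ ≤ 2 ^ m := Nat.pow_le_pow_right two_pos hm
  refine (two_mul_mul_pow_le_pow_two_mul h4 k).trans ?_
  rw [← pow_mul, show m * (2 * k) = 2 * m * k by ring]
  exact pow_mul_le_of_eq_log_div (hk.trans (mod_cast natFloor_logb_div_natCast 2 n (2 * m))) hk1

theorem le_four_mul_of_two_pow_le {n m K S B : ℕ} (hm : 8 ≤ m) (hK : 2 * K ≤ n)
    (hS : (S : ℝ) ≤ 1 / 8 * n * m) (h : (2 ^ m) ^ (n - K) ≤ (2 ^ m) ^ B * (2 ^ S * 2 ^ n)) :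
    n ≤ 4 * B := by
  rw [← pow_mul, ← pow_mul, ← pow_add, ← pow_add, Nat.pow_le_pow_iff_right (by norm_num)] at h
  have hK' : (K : ℝ) ≤ n / 2 := by
    rw [le_div_iff₀ two_pos]; exact_mod_cast (mul_comm K 2 ▸ hK)
  have h' : (m : ℝ) * (n - K) ≤ m * B + (S + n) := by
    rw [← Nat.cast_sub (by omega)]; exact_mod_cast h
  have hm' : (8 : ℝ) ≤ m := by exact_mod_cast hm
  suffices (n : ℝ) ≤ 4 * B by exact_mod_cast this
  nlinarith [mul_le_mul_of_nonneg_left hK' (by linarith : (0 : ℝ) ≤ m),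
    mul_le_mul_of_nonneg_left hm' (Nat.cast_nonneg n : (0 : ℝ) ≤ n)]

theorem le_mul_of_le_mul_mul_div {a b c n : ℕ} (hn : 0 < n) (h : n ≤ c * (b * n / a)) :
    a ≤ c * b := by
  have hna : n * a ≤ n * (c * b) :=
    calc n * a ≤ c * (b * n / a * a) := by rw [← mul_assoc]; exact Nat.mul_le_mul_right a h
      _ ≤ c * (b * n) := Nat.mul_le_mul_left c (Nat.div_mul_le_self _ _)
      _ = n * (c * b) := by ring
  exact Nat.le_of_mul_le_mul_left hna hn

/-- Main lower bound (combinatorial core): let `n ≥ 2^8`, `σ = 2^m` with `m ≥ 8`,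
`k = ⌊log₂ n / (2m)⌋ ≥ 1`, and `S ≤ (1/8)·n·m`.  Let `F` be the family of all
strings of length `n` starting with the fixed de Bruijn-style prefix listing all
length-`k` strings (via the enumeration `e`).  If each `s ∈ F` is assigned an
`S`-bit encoding and a probe set `P s ⊆ {0,…,n−1}` with `|P s| ≤ T·n/k`, such
that any two strings with equal encodings and agreeing on their (equal) probe
sets are equal, then `T ≥ k/4`. -/
theorem stmt_11 (n m k S T : ℕ) (hm : 8 ≤ m)
    (σ : ℕ) (hσ : σ = 2 ^ m)
    (hk : k = ⌊Real.logb 2 n / (2 * m)⌋₊) (hk1 : 1 ≤ k)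
    (hkn : k * σ ^ k ≤ n)
    (hS : (S : ℝ) ≤ (1 / 8 : ℝ) * n * m)
    (e : Fin (σ ^ k) ≃ (Fin k → Fin σ))
    (F : Finset (Fin n → Fin σ))
    (hF : F = Finset.univ.filter (fun s => ∀ (j : Fin (σ ^ k)) (a : Fin k),
        s ⟨j.1 * k + a.1,
            lt_of_lt_of_le (by nlinarith [j.2, a.2]) hkn⟩ = e j a))
    (enc : (Fin n → Fin σ) → Fin (2 ^ S))
    (P : (Fin n → Fin σ) → Finset (Fin n))
    (hP : ∀ s ∈ F, (P s).card * k ≤ T * n)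
    (hdist : ∀ s ∈ F, ∀ s' ∈ F, enc s = enc s' → P s = P s' →
        (∀ i ∈ P s, s i = s' i) → s = s') :
    (k : ℝ) / 4 ≤ (T : ℝ) := by
  subst hσ
  have hK : 2 * (k * (2 ^ m) ^ k) ≤ n := two_mul_mul_pow_le_of_eq_floor_logb (by omega) hk hk1
  -- `pos (j, a) = a + k * j`, the position of symbol `a` of the `j`-th block of the prefix
  let pos : Fin ((2 ^ m) ^ k) × Fin k ↪ Fin n :=
    finProdFinEquiv.toEmbedding.trans (Fin.castLEEmb (mul_comm k _ ▸ hkn))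
  have hlower : (2 ^ m) ^ (n - k * (2 ^ m) ^ k) ≤ #F := by
    refine le_trans ?_ (card_le_card (s := {s | s ∘ pos = fun c => e c.1 c.2}) ?_)
    · simpa [mul_comm] using card_pow_sub_card_le_card_filter_comp_eq pos (fun c => e c.1 c.2)
    intro s hs
    simp only [mem_filter, mem_univ, true_and, hF] at hs ⊢
    intro j a
    exact (congrArg s (Fin.ext (by simp [pos]; ring))).trans (congrFun hs (j, a))
  have hupper : #F ≤ (2 ^ m) ^ (T * n / k) * (2 ^ S * 2 ^ n) := by
    simpa using card_le_of_determined_by_encoding_and_probes F enc P (T * n / k)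
      (fun s hs => (Nat.le_div_iff_mul_le hk1).2 (hP s hs)) hdist
  have hn0 : 0 < n := by
    have : 0 < k * (2 ^ m) ^ k := Nat.mul_pos hk1 (by positivity)
    omega
  have hkT : k ≤ 4 * T :=
    le_mul_of_le_mul_mul_div hn0 (le_four_mul_of_two_pow_le hm hK hS (hlower.trans hupper))
  have : (k : ℝ) ≤ 4 * T := by exact_mod_cast hkT
  linarith
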